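/- Let s[1..n] be a string with C its array of previous-occurrence pointers and H₀(s) its 0th-order empirical entropy, and let δ > 0. For integers k ≥ 0 define the block sizes b_k = 2^{⌈(1+δ)^k⌉}. For each position q with C[q] ≥ 1, let β(q) be the smallest block size b_k such that some overlapping block of size b_k contains both positions C[q] and q (such a b_k exists since b_k → ∞). Then ∑_{q : C[q] ≥ 1} log₂ β(q) ≤ (1+δ)·n·H₀(s) + 5(1+δ)·n. -/

import Mathlib

/-!
If `β(q) = b_k` with `k` minimal, then `C[q]` and `q` share no block of size `b_{k-1}`, so the
gap `q - C[q]` exceeds `b_{k-1} / 2`; as `log₂ b_k ≤ (1+δ) log₂ b_{k-1} + 1`, this gives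
`log₂ β(q) ≤ (1+δ) log₂ (q - C[q]) + 2(1+δ)`. For a fixed character `c`, the `n_c - 1` gaps
`(C[q], q]` with `s[q] = c` are disjoint subintervals of `[1, n]`, so by concavity of `log₂`
their logarithms sum to at most `(n_c - 1) log₂ (n / (n_c - 1)) ≤ n_c log₂ (n / n_c) + 2`.
Summing over the characters bounds `∑ log₂ (q - C[q])` by `n H₀(s) + 2n`.
-/

/-- `C` is the previous-occurrence array for the string `s[1..n]`:
`C q` is the largest `p < q` (with `p ≥ 1`) such that `s p = s q`, or `0` if none exists. -/
def prevOcc {α : Type*} (n : ℕ) (s : ℕ → α) (C : ℕ → ℕ) : Prop :=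
  ∀ q, 1 ≤ q → q ≤ n →
    (1 ≤ C q ∧ C q < q ∧ s (C q) = s q ∧ ∀ p, C q < p → p < q → s p ≠ s q) ∨
    (C q = 0 ∧ ∀ p, 1 ≤ p → p < q → s p ≠ s q)

/-- The 0th-order empirical entropy `H₀` of the string `s[1..n]`:
`∑_c (n_c/n)·log₂(n/n_c)` over the characters `c` occurring in `s`,
where `n_c` is the number of occurrences of `c` in `s[1..n]`. -/
noncomputable def H0 {α : Type*} [DecidableEq α] (n : ℕ) (s : ℕ → α) : ℝ :=
  ∑ c ∈ (Finset.Icc 1 n).image s,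
    (((Finset.Icc 1 n).filter (fun q => s q = c)).card : ℝ) / n *
      Real.logb 2 ((n : ℝ) / ((Finset.Icc 1 n).filter (fun q => s q = c)).card)

/-- The `k`-th block size: `b_k = 2^⌈(1+δ)^k⌉`. -/
noncomputable def blockSize (δ : ℝ) (k : ℕ) : ℕ := 2 ^ ⌈(1 + δ) ^ k⌉₊

/-- Positions `p ≤ q` lie in a common overlapping block of (even) size `b`,
i.e. there is `m ≥ 0` with `m·b/2 + 1 ≤ p` and `q ≤ m·b/2 + b`. -/
def inCommonBlock (b p q : ℕ) : Prop :=
  ∃ m : ℕ, m * (b / 2) + 1 ≤ p ∧ q ≤ m * (b / 2) + b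

open Finset Real

lemma inCommonBlock_two_mul {h p q : ℕ} (hh : 0 < h) (hp : 1 ≤ p) (hq : q ≤ p + h) :
    inCommonBlock (2 * h) p q := by
  refine ⟨(p - 1) / h, ?_, ?_⟩ <;> rw [Nat.mul_div_cancel_left h two_pos]
  · have := Nat.div_mul_le_self (p - 1) h
    omega
  · have := Nat.lt_div_mul_add (a := p - 1) hh
    omega

lemma logb_blockSize (δ : ℝ) (k : ℕ) : logb 2 (blockSize δ k) = ⌈(1 + δ) ^ k⌉₊ := by
  simp [blockSize, logb_pow]

lemma logb_blockSize_le {δ : ℝ} (hδ : 0 ≤ δ) {k p q : ℕ} (hp : 1 ≤ p)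
    (hmin : ∀ k' < k, ¬ inCommonBlock (blockSize δ k') p q) :
    logb 2 (blockSize δ k) ≤ (1 + δ) * logb 2 (q - p : ℕ) + 2 * (1 + δ) := by
  rw [logb_blockSize]
  cases k with
  | zero =>
    have : 0 ≤ logb 2 (q - p : ℕ) := div_nonneg (log_natCast_nonneg _) (log_nonneg one_le_two)
    rw [pow_zero, Nat.ceil_one, Nat.cast_one]
    nlinarith
  | succ j =>
    set M := ⌈(1 + δ) ^ j⌉₊
    have hM : 1 ≤ M := Nat.one_le_ceil_iff.mpr (by positivity)
    have hgap : 2 ^ (M - 1) < q - p := by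
      by_contra! hle
      refine hmin j j.lt_succ_self ?_
      have hb : blockSize δ j = 2 * 2 ^ (M - 1) := by
        rw [blockSize, ← pow_succ', Nat.sub_add_cancel hM]
      rw [hb]
      exact inCommonBlock_two_mul (by positivity) hp (by omega)
    have hlog : (M : ℝ) - 1 ≤ logb 2 (q - p : ℕ) := by
      have := logb_le_logb_of_le one_lt_two (by positivity)
        (show ((2 ^ (M - 1) : ℕ) : ℝ) ≤ (q - p : ℕ) by exact_mod_cast hgap.le)
      simpa [logb_pow, Nat.cast_sub hM] using this
    have hceil : (⌈(1 + δ) ^ (j + 1)⌉₊ : ℝ) < (1 + δ) * (1 + δ) ^ j + 1 := by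
      rw [← pow_succ']
      exact Nat.ceil_lt_add_one (by positivity)
    have hMj : (1 + δ) ^ j ≤ (M : ℝ) := Nat.le_ceil _
    nlinarith

lemma concaveOn_logb_two : ConcaveOn ℝ (Set.Ioi 0) (logb 2) := by
  have hlogb : logb 2 = fun x => (log 2)⁻¹ • log x := by
    ext x
    rw [logb, smul_eq_mul, inv_mul_eq_div]
  rw [hlogb]
  exact strictConcaveOn_log_Ioi.concaveOn.smul (inv_nonneg.2 (log_nonneg one_le_two))

lemma sum_logb_le_card_mul_logb_div {ι : Type*} {t : Finset ι} {f : ι → ℝ} {N : ℝ}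
    (hf : ∀ i ∈ t, 0 < f i) (hN : ∑ i ∈ t, f i ≤ N) :
    ∑ i ∈ t, logb 2 (f i) ≤ #t * logb 2 (N / #t) := by
  rcases t.eq_empty_or_nonempty with rfl | ht
  · simp
  have hcard : (0 : ℝ) < #t := by exact_mod_cast ht.card_pos
  have hjensen := concaveOn_logb_two.le_map_sum (t := t) (w := fun _ => (#t : ℝ)⁻¹) (p := f)
    (fun _ _ => by positivity) (by simp [hcard.ne']) hf
  simp only [smul_eq_mul, ← mul_sum] at hjensen
  have hmean : (#t : ℝ)⁻¹ * ∑ i ∈ t, f i ≤ N / #t := by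
    rw [inv_mul_eq_div]
    gcongr
  have hpos : 0 < (#t : ℝ)⁻¹ * ∑ i ∈ t, f i := by
    have := sum_pos hf ht
    positivity
  calc ∑ i ∈ t, logb 2 (f i) = #t * ((#t : ℝ)⁻¹ * ∑ i ∈ t, logb 2 (f i)) := by
        field_simp
    _ ≤ #t * logb 2 (N / #t) := by
        gcongr
        exact hjensen.trans (logb_le_logb_of_le one_lt_two hpos hmean)

lemma mul_logb_div_le_add_one {x N : ℝ} (hx : 0 ≤ x) (hN : x + 1 ≤ N) :
    x * logb 2 (N / x) ≤ (x + 1) * logb 2 (N / (x + 1)) + 2 := by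
  have hN' : 0 ≤ logb 2 (N / (x + 1)) :=
    logb_nonneg one_lt_two ((one_le_div (by positivity)).2 hN)
  rcases hx.eq_or_lt with rfl | hx
  · simp only [zero_add, div_one, zero_mul] at hN' ⊢
    linarith
  have hsplit : logb 2 (N / x) = logb 2 (N / (x + 1)) + logb 2 ((x + 1) / x) := by
    rw [← logb_mul (div_pos (by linarith) (by linarith)).ne' (by positivity)]
    congr 1
    field_simp
  -- `x · log₂ (1 + 1/x) ≤ log₂ e < 2`
  have htail : x * logb 2 ((x + 1) / x) ≤ 2 := by
    have hlog : log ((x + 1) / x) ≤ 1 / x := by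
      have := log_le_sub_one_of_pos (show 0 < (x + 1) / x by positivity)
      rw [add_div, div_self hx.ne'] at this ⊢
      linarith
    rw [logb, mul_div_assoc', div_le_iff₀ (log_pos one_lt_two)]
    calc x * log ((x + 1) / x) ≤ x * (1 / x) := by gcongr
      _ = 1 := by field_simp
      _ ≤ 2 * log 2 := by linarith [log_two_gt_d9]
  rw [hsplit, mul_add]
  nlinarith

lemma mul_H0 {α : Type*} [DecidableEq α] (n : ℕ) (s : ℕ → α) :
    n * H0 n s = ∑ c ∈ (Icc 1 n).image s,
      #{q ∈ Icc 1 n | s q = c} * logb 2 (n / #{q ∈ Icc 1 n | s q = c}) := by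
  rw [H0, mul_sum]
  refine sum_congr rfl fun c hc => ?_
  obtain ⟨q, hq, -⟩ := mem_image.1 hc
  have : (n : ℝ) ≠ 0 := by
    have := (mem_Icc.1 hq).1.trans (mem_Icc.1 hq).2
    positivity
  field_simp

namespace prevOcc

variable {α : Type*} {n : ℕ} {s : ℕ → α} {C : ℕ → ℕ} {p q : ℕ}

lemma apply_lt (hC : prevOcc n s C) (hq : q ∈ Icc 1 n) (hCq : 1 ≤ C q) : C q < q := by
  obtain ⟨hq1, hqn⟩ := mem_Icc.1 hq
  rcases hC q hq1 hqn with ⟨-, h, -⟩ | ⟨h, -⟩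
  · exact h
  · omega

lemma le_apply_of_lt (hC : prevOcc n s C) (hq : q ∈ Icc 1 n) (hCq : 1 ≤ C q) (hpq : p < q)
    (hs : s p = s q) : p ≤ C q := by
  obtain ⟨hq1, hqn⟩ := mem_Icc.1 hq
  rcases hC q hq1 hqn with ⟨-, -, -, h⟩ | ⟨h, -⟩
  · by_contra! hlt
    exact h p hlt hpq hs
  · omega

lemma one_le_apply_iff (hC : prevOcc n s C) (hq : q ∈ Icc 1 n) :
    1 ≤ C q ↔ ∃ p ∈ Icc 1 n, p < q ∧ s p = s q := by
  obtain ⟨hq1, hqn⟩ := mem_Icc.1 hq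
  rcases hC q hq1 hqn with ⟨h1, hlt, hs, -⟩ | ⟨h0, h⟩
  · exact iff_of_true h1 ⟨C q, mem_Icc.2 ⟨h1, by omega⟩, hlt, hs⟩
  · refine iff_of_false (by omega) ?_
    rintro ⟨p, hp, hpq, hs⟩
    exact h p (mem_Icc.1 hp).1 hpq hs

variable [DecidableEq α]

lemma filter_one_le_eq_erase_min' (hC : prevOcc n s C) {c : α}
    (h : {q ∈ Icc 1 n | s q = c}.Nonempty) :
    {q ∈ {q ∈ Icc 1 n | 1 ≤ C q} | s q = c} =
      {q ∈ Icc 1 n | s q = c}.erase ({q ∈ Icc 1 n | s q = c}.min' h) := by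
  ext q
  simp only [mem_filter, mem_erase]
  constructor
  · rintro ⟨⟨hq, hCq⟩, hs⟩
    obtain ⟨p, hp, hpq, hps⟩ := (hC.one_le_apply_iff hq).1 hCq
    exact ⟨((min'_le _ p (mem_filter.2 ⟨hp, hps.trans hs⟩)).trans_lt hpq).ne', hq, hs⟩
  · rintro ⟨hne, hq, hs⟩
    have hlt := (min'_le _ q (mem_filter.2 ⟨hq, hs⟩)).lt_of_ne' hne
    obtain ⟨hmin, hmins⟩ := mem_filter.1 (min'_mem _ h)
    exact ⟨⟨hq, (hC.one_le_apply_iff hq).2 ⟨_, hmin, hlt, hmins.trans hs.symm⟩⟩, hs⟩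

lemma card_filter_one_le_add_one (hC : prevOcc n s C) {c : α} (hc : c ∈ (Icc 1 n).image s) :
    #{q ∈ {q ∈ Icc 1 n | 1 ≤ C q} | s q = c} + 1 = #{q ∈ Icc 1 n | s q = c} := by
  have h : {q ∈ Icc 1 n | s q = c}.Nonempty := by
    obtain ⟨q, hq, hs⟩ := mem_image.1 hc
    exact ⟨q, mem_filter.2 ⟨hq, hs⟩⟩
  rw [hC.filter_one_le_eq_erase_min' h, card_erase_add_one (min'_mem _ h)]

lemma sum_sub_le (hC : prevOcc n s C) (c : α) :
    ∑ q ∈ {q ∈ {q ∈ Icc 1 n | 1 ≤ C q} | s q = c}, (q - C q) ≤ n := by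
  set T := {q ∈ {q ∈ Icc 1 n | 1 ≤ C q} | s q = c}
  have hmem : ∀ q ∈ T, q ∈ Icc 1 n ∧ 1 ≤ C q ∧ s q = c := by
    intro q hq
    simpa only [T, mem_filter, and_assoc] using hq
  have hdisj : (T : Set ℕ).PairwiseDisjoint fun q => Ioc (C q) q := by
    have key : ∀ q₁ ∈ T, ∀ q₂ ∈ T, q₁ < q₂ → Disjoint (Ioc (C q₁) q₁) (Ioc (C q₂) q₂) := by
      intro q₁ h₁ q₂ h₂ hlt
      obtain ⟨-, -, hs₁⟩ := hmem q₁ h₁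
      obtain ⟨hq₂, hC₂, hs₂⟩ := hmem q₂ h₂
      have := hC.le_apply_of_lt hq₂ hC₂ hlt (hs₁.trans hs₂.symm)
      rw [disjoint_left]
      intro x hx₁ hx₂
      rw [mem_Ioc] at hx₁ hx₂
      omega
    intro q₁ h₁ q₂ h₂ hne
    rcases Nat.lt_or_gt_of_ne hne with hlt | hlt
    · exact key q₁ h₁ q₂ h₂ hlt
    · exact (key q₂ h₂ q₁ h₁ hlt).symm
  calc ∑ q ∈ T, (q - C q) = #(T.biUnion fun q => Ioc (C q) q) := by
        rw [card_biUnion hdisj]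
        simp only [Nat.card_Ioc]
    _ ≤ #(Icc 1 n) := by
        refine card_le_card fun x hx => ?_
        obtain ⟨q, hq, hx⟩ := mem_biUnion.1 hx
        have := mem_Icc.1 (hmem q hq).1
        rw [mem_Ioc] at hx
        rw [mem_Icc]
        omega
    _ = n := by simp

lemma sum_logb_sub_le (hC : prevOcc n s C) {c : α} (hc : c ∈ (Icc 1 n).image s) :
    ∑ q ∈ {q ∈ {q ∈ Icc 1 n | 1 ≤ C q} | s q = c}, logb 2 (q - C q : ℕ) ≤
      #{q ∈ Icc 1 n | s q = c} * logb 2 (n / #{q ∈ Icc 1 n | s q = c}) + 2 := by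
  set T := {q ∈ {q ∈ Icc 1 n | 1 ≤ C q} | s q = c}
  have hgap : ∀ q ∈ T, (0 : ℝ) < (q - C q : ℕ) := by
    intro q hq
    simp only [T, mem_filter] at hq
    have := hC.apply_lt hq.1.1 hq.1.2
    exact_mod_cast Nat.sub_pos_of_lt this
  have hocc : (#T : ℝ) + 1 ≤ n := by
    rw [← Nat.cast_add_one, hC.card_filter_one_le_add_one hc]
    exact_mod_cast (card_filter_le _ _).trans (Nat.card_Icc 1 n).le
  calc ∑ q ∈ T, logb 2 (q - C q : ℕ) ≤ #T * logb 2 (n / #T) :=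
        sum_logb_le_card_mul_logb_div hgap (by exact_mod_cast hC.sum_sub_le c)
    _ ≤ (#T + 1) * logb 2 (n / (#T + 1)) + 2 := mul_logb_div_le_add_one (by positivity) hocc
    _ = _ := by rw [← Nat.cast_add_one, hC.card_filter_one_le_add_one hc]

lemma sum_logb_sub_le_mul_H0 (hC : prevOcc n s C) :
    ∑ q ∈ {q ∈ Icc 1 n | 1 ≤ C q}, logb 2 (q - C q : ℕ) ≤ n * H0 n s + 2 * n := by
  rw [← sum_fiberwise_of_maps_to (g := s) (t := (Icc 1 n).image s)
    fun q hq => mem_image_of_mem s (mem_filter.1 hq).1]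
  have hchars : (#((Icc 1 n).image s) : ℝ) ≤ n := by
    exact_mod_cast card_image_le.trans (Nat.card_Icc 1 n).le
  calc _ ≤ ∑ c ∈ (Icc 1 n).image s,
          (#{q ∈ Icc 1 n | s q = c} * logb 2 (n / #{q ∈ Icc 1 n | s q = c}) + 2) :=
        sum_le_sum fun c hc => hC.sum_logb_sub_le hc
    _ = n * H0 n s + #((Icc 1 n).image s) * 2 := by
        rw [sum_add_distrib, mul_H0, sum_const, nsmul_eq_mul]
    _ ≤ n * H0 n s + 2 * n := by linarith

end prevOcc

theorem stmt_11_general {α : Type*} [DecidableEq α] (n : ℕ)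
    (s : ℕ → α) (C : ℕ → ℕ) (hC : prevOcc n s C) (δ : ℝ) (hδ : 0 < δ)
    (β : ℕ → ℕ)
    (hβ : ∀ q, 1 ≤ q → q ≤ n → 1 ≤ C q →
      ∃ k : ℕ, β q = blockSize δ k ∧ inCommonBlock (blockSize δ k) (C q) q ∧
        ∀ k' : ℕ, k' < k → ¬ inCommonBlock (blockSize δ k') (C q) q) :
    ∑ q ∈ (Finset.Icc 1 n).filter (fun q => 1 ≤ C q), Real.logb 2 (β q : ℝ) ≤
      (1 + δ) * n * H0 n s + 5 * (1 + δ) * n := by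
  set S := {q ∈ Icc 1 n | 1 ≤ C q}
  have hβ_le : ∀ q ∈ S, logb 2 (β q : ℝ) ≤ (1 + δ) * logb 2 (q - C q : ℕ) + 2 * (1 + δ) := by
    intro q hq
    obtain ⟨hq, hCq⟩ := mem_filter.1 hq
    obtain ⟨k, hk, -, hmin⟩ := hβ q (mem_Icc.1 hq).1 (mem_Icc.1 hq).2 hCq
    rw [hk]
    exact logb_blockSize_le hδ.le hCq hmin
  have hS : (#S : ℝ) ≤ n := by exact_mod_cast (card_filter_le _ _).trans (Nat.card_Icc 1 n).le
  have hδn : 0 ≤ (1 + δ) * n := by positivity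
  calc ∑ q ∈ S, logb 2 (β q : ℝ) ≤ ∑ q ∈ S, ((1 + δ) * logb 2 (q - C q : ℕ) + 2 * (1 + δ)) :=
        sum_le_sum hβ_le
    _ = (1 + δ) * ∑ q ∈ S, logb 2 (q - C q : ℕ) + #S * (2 * (1 + δ)) := by
        rw [sum_add_distrib, ← mul_sum, sum_const, nsmul_eq_mul]
    _ ≤ (1 + δ) * (n * H0 n s + 2 * n) + n * (2 * (1 + δ)) := by
        gcongr
        exact hC.sum_logb_sub_le_mul_H0
    _ ≤ (1 + δ) * n * H0 n s + 5 * (1 + δ) * n := by linarith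

theorem stmt_11 {α : Type*} [DecidableEq α] (n : ℕ) (hn : 1 ≤ n)
    (s : ℕ → α) (C : ℕ → ℕ) (hC : prevOcc n s C) (δ : ℝ) (hδ : 0 < δ)
    (β : ℕ → ℕ)
    (hβ : ∀ q, 1 ≤ q → q ≤ n → 1 ≤ C q →
      ∃ k : ℕ, β q = blockSize δ k ∧ inCommonBlock (blockSize δ k) (C q) q ∧
        ∀ k' : ℕ, k' < k → ¬ inCommonBlock (blockSize δ k') (C q) q) :
    ∑ q ∈ (Finset.Icc 1 n).filter (fun q => 1 ≤ C q), Real.logb 2 (β q : ℝ) ≤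
      (1 + δ) * n * H0 n s + 5 * (1 + δ) * n :=
  stmt_11_general n s C hC δ hδ β hβ
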